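/- arXiv:1209.5169 — 5 statements merged into one kernel-verified Lean document; each statement's English description precedes it below -/
import Mathlib

section
/- Let G be a primitive permutation group of finite degree n containing a cycle that fixes exactly k points (so the cycle has length n − k ≥ 2). Then G is (k+1)-transitive on the n points. -/
/-!
By induction on `k`. For `k ≥ 1`, the pointwise stabiliser of the fixed points of the cycle `g`
is transitive on its support, so Jordan's criterion (`IsPreprimitive.is_two_pretransitive`)
makes `G` 2-transitive. For `k ≥ 2`, `g` restricts to a cycle with `k - 1` fixed points in the
stabiliser `G_a` of a fixed point `a`, so it remains to show that `G_a` is primitive on the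
other points.

Let `D` be a block of `G_a` of size `b > 1` and let `S` be the support of `g`, of size `m`.
A block meeting the support of a cycle `h ∈ G_a` either contains it or lies inside it, and in
the latter case `h ^ (m / b)` stabilises it. So for a suitable `0 < e < m`, for `u ∈ D ∩ S`
and for every `γ ∈ G_u` with `γ • a` fixed by `g`, applying this to `γ⁻¹ g γ ∈ G_a` puts
`γ⁻¹ • g ^ e • u ≠ u` in `D`. As `G_u` is transitive on the points other than `u`, counting
elements of `G_u` gives `k < b`. Hence every block meets `S`; the block through a fixed point
other than `a` then contains `S`, so it meets every block, which forces `b = n - 1`.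
-/

/-- `G` acts preprimitively on `α`: the action is pretransitive and every block is trivial. -/
def IsPreprimitive (G : Type*) (α : Type*) [Group G] [MulAction G α] : Prop :=
  MulAction.IsPretransitive G α ∧
    ∀ B : Set α, MulAction.IsBlock G B → MulAction.IsTrivialBlock B

/-- `G` acts `n`-fold pretransitively on `α`: the induced action on embeddings of `Fin n`
into `α` (i.e. on ordered `n`-tuples of distinct elements) is pretransitive. -/
def IsMultiplyPretransitive (G : Type*) (α : Type*) [Group G] [MulAction G α] (n : ℕ) : Prop :=
  MulAction.IsPretransitive G (Fin n ↪ α)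

open Equiv Pointwise SubMulAction
open scoped Finset

namespace MulAction

variable {G α : Type*} [Group G] [MulAction G α]

theorem toPerm_zpow_apply (g : G) (i : ℤ) (x : α) : (toPerm g ^ i) x = g ^ i • x := by
  change (toPermHom G α g ^ i) x = _
  rw [← map_zpow]; rfl

theorem IsBlock.subset_or_subset_of_isCycle {D : Set α} (hD : IsBlock G D) {g : G}
    (hg : (toPerm g : Perm α).IsCycle) (hmeet : (D ∩ (fixedBy α g)ᶜ).Nonempty) :
    D ⊆ (fixedBy α g)ᶜ ∨ (fixedBy α g)ᶜ ⊆ D := by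
  refine or_iff_not_imp_left.mpr fun hD_sub => ?_
  obtain ⟨p, hpD, hp⟩ := Set.not_subset.mp hD_sub
  have hgp : g • p = p := by simpa using hp
  have hgD : g ∈ stabilizer G D := hD.smul_eq_of_mem hpD (hgp.symm ▸ hpD)
  obtain ⟨x, hxD, hx⟩ := hmeet
  intro y hy
  obtain ⟨i, rfl⟩ := hg.exists_zpow_eq hx hy
  rw [toPerm_zpow_apply, ← zpow_mem hgD i]
  exact Set.smul_mem_smul_set hxD

variable (α) in
def zpowersSupport (g : G) : SubMulAction (Subgroup.zpowers g) α where
  carrier := (fixedBy α g)ᶜ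
  smul_mem' c x hx := by
    obtain ⟨i, hi⟩ := Subgroup.mem_zpowers_iff.mp c.2
    simp only [Set.mem_compl_iff, mem_fixedBy] at hx ⊢
    rw [Subgroup.smul_def, ← hi, smul_smul, (Commute.self_zpow g i).eq, ← smul_smul]
    exact fun h => hx (smul_left_cancel _ h)

theorem IsBlock.pow_smul_eq_of_subset_compl_fixedBy [Finite α] {D : Set α} (hD : IsBlock G D)
    {g : G} (hg : (toPerm g : Perm α).IsCycle) (hDne : D.Nonempty) (hDs : D ⊆ (fixedBy α g)ᶜ) :
    D.ncard ∣ (fixedBy α g)ᶜ.ncard ∧ g ^ ((fixedBy α g)ᶜ.ncard / D.ncard) • D = D := by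
  set C := Subgroup.zpowers g
  set T := zpowersSupport α g
  have : IsPretransitive C T := ⟨fun x y => by
    obtain ⟨i, hi⟩ := hg.exists_zpow_eq x.2 y.2
    exact ⟨⟨g ^ i, zpow_mem (Subgroup.mem_zpowers g) i⟩, Subtype.ext (by
      rw [← hi, toPerm_zpow_apply]; rfl)⟩⟩
  set D' : Set T := Subtype.val ⁻¹' D
  have hD' : IsBlock C D' := hD.subgroup.subtype_val_preimage
  have hcard : D'.ncard = D.ncard :=
    Set.ncard_preimage_of_injective_subset_range Subtype.val_injective
      (fun y hy => ⟨⟨y, hDs hy⟩, rfl⟩)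
  obtain ⟨x, hx⟩ := hDne
  have key := hD'.ncard_block_mul_ncard_orbit_eq ⟨⟨x, hDs hx⟩, hx⟩
  have hT : Nat.card T = (fixedBy α g)ᶜ.ncard := Nat.card_coe_set_eq _
  rw [hcard, hT] at key
  refine ⟨Dvd.intro _ key, hD.smul_eq_of_mem hx ?_⟩
  have hpos : 0 < D.ncard := (Set.ncard_pos D.toFinite).mpr ⟨x, hx⟩
  -- `C` is abelian, so `stabilizer C D'` contains the power of `g` given by its index
  rw [← key, Nat.mul_div_cancel_left _ hpos, ← index_stabilizer]
  have := Subgroup.normal_of_isMulCommutative (stabilizer C D')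
  have hc : ((⟨g, Subgroup.mem_zpowers g⟩ : C) ^ (stabilizer C D').index) • D' = D' :=
    Subgroup.pow_index_mem (stabilizer C D') _
  have := Set.smul_mem_smul_set (a := (⟨g, Subgroup.mem_zpowers g⟩ : C) ^ (stabilizer C D').index)
    (show (⟨x, hDs hx⟩ : T) ∈ D' from hx)
  rwa [hc] at this

theorem IsBlock.pow_smul_mem_of_isCycle [Finite α] {D : Set α} (hD : IsBlock G D) {g : G}
    (hg : (toPerm g : Perm α).IsCycle) {u : α} (huD : u ∈ D) (hu : u ∈ (fixedBy α g)ᶜ) {e : ℕ}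
    (he : D.ncard ∣ (fixedBy α g)ᶜ.ncard → (fixedBy α g)ᶜ.ncard / D.ncard ∣ e) :
    g ^ e • u ∈ D := by
  rcases hD.subset_or_subset_of_isCycle hg ⟨u, huD, hu⟩ with hDs | hsD
  · obtain ⟨hdvd, hgD⟩ := hD.pow_smul_eq_of_subset_compl_fixedBy hg ⟨u, huD⟩ hDs
    obtain ⟨j, rfl⟩ := he hdvd
    have hgjD : (g ^ ((fixedBy α g)ᶜ.ncard / D.ncard)) ^ j ∈ stabilizer G D := pow_mem hgD j
    have := Set.smul_mem_smul_set (a := (g ^ ((fixedBy α g)ᶜ.ncard / D.ncard)) ^ j) huD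
    rwa [mem_stabilizer_iff.mp hgjD, ← pow_mul] at this
  · apply hsD
    rw [← mem_fixedBy.mp (movedBy_mem_fixedBy_of_commute (α := α) (Commute.self_pow g e))]
    exact Set.smul_mem_smul_set hu

theorem ncard_setOf_smul_mem [Finite G] {p : α} {T : Set α} (hT : T ⊆ orbit G p) :
    {γ : G | γ • p ∈ T}.ncard = T.ncard * Nat.card (stabilizer G p) := by
  classical
  have := Fintype.ofFinite G
  obtain ⟨T, rfl⟩ := ((Set.finite_range _).subset hT).exists_finset_coe
  have hfiber (q : α) (hq : q ∈ T) :
      #{γ ∈ {γ : G | γ • p ∈ (T : Set α)} | γ • p = q} = Nat.card (stabilizer G p) := by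
    obtain ⟨δ, rfl⟩ := hT hq
    rw [Nat.card_eq_fintype_card, Fintype.card_subtype, Finset.filter_filter]
    refine Finset.card_nbij' (δ⁻¹ * ·) (δ * ·) ?_ ?_ ?_ ?_ <;> intro γ <;>
      simp +contextual [mem_stabilizer_iff, mul_smul, hq]
  rw [Set.ncard_eq_toFinset_card', Set.toFinset_ofPred, Set.ncard_coe_finset,
    Finset.card_eq_sum_card_fiberwise (f := (· • p)) (t := T) fun γ hγ => by simpa using hγ,
    Finset.sum_congr rfl hfiber, Finset.sum_const, smul_eq_mul]

theorem ncard_le_ncard_of_forall_smul_mem [Finite G] {a v : α} (hv : v ∈ orbit G a)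
    {F T : Set α} (hF : F ⊆ orbit G a) (hT : T ⊆ orbit G a)
    (h : ∀ γ : G, γ • a ∈ F → γ⁻¹ • v ∈ T) : F.ncard ≤ T.ncard := by
  have hsub : {γ : G | γ • a ∈ F} ⊆ {γ : G | γ • v ∈ T}⁻¹ := fun γ hγ => by simpa using h γ hγ
  have := Set.ncard_le_ncard hsub (Set.toFinite _)
  rw [Set.ncard_inv, ncard_setOf_smul_mem hF, ncard_setOf_smul_mem (orbit_eq_iff.mpr hv ▸ hT),
    Nat.card_congr (stabilizerEquivStabilizerOfOrbitRel hv).toEquiv] at this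
  exact Nat.le_of_mul_le_mul_right this Nat.card_pos

theorem coe_support_toPerm [Fintype α] [DecidableEq α] (g : G) :
    ((toPerm g : Perm α).support : Set α) = (fixedBy α g)ᶜ := by
  ext; simp [Perm.mem_support]

theorem two_le_ncard_compl_fixedBy [Finite α] {g : G} (hg : (toPerm g : Perm α).IsCycle) :
    2 ≤ (fixedBy α g)ᶜ.ncard := by
  classical
  have := Fintype.ofFinite α
  rw [← coe_support_toPerm, Set.ncard_coe_finset]
  exact hg.two_le_card_support

theorem pow_smul_ne_of_isCycle [Finite α] {g : G} (hg : (toPerm g : Perm α).IsCycle) {u : α}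
    (hu : u ∈ (fixedBy α g)ᶜ) {e : ℕ} (he0 : 0 < e) (hem : e < (fixedBy α g)ᶜ.ncard) :
    g ^ e • u ≠ u := by
  classical
  have := Fintype.ofFinite α
  intro hgu
  have h1 : toPerm g ^ e = 1 := (hg.pow_eq_one_iff' hu).mpr (by
    rw [← zpow_natCast, toPerm_zpow_apply, zpow_natCast, hgu])
  have := Nat.le_of_dvd he0 (orderOf_dvd_of_pow_eq_one h1)
  rw [hg.orderOf, ← Set.ncard_coe_finset, coe_support_toPerm] at this
  omega

theorem IsBlock.smul_stabilizer {a : α} {D : Set α} (hD : IsBlock (stabilizer G a) D) (γ : G) :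
    IsBlock (stabilizer G (γ • a)) (γ • D) := by
  rw [stabilizer_smul_eq_stabilizer_map_conj]
  exact hD.of_subgroup_of_conjugate γ

theorem orbit_stabilizer_eq_compl_singleton (h2 : IsMultiplyPretransitive G α 2) {u a : α}
    (hau : a ≠ u) : orbit (stabilizer G u) a = {u}ᶜ := by
  ext x
  constructor
  · rintro ⟨γ, rfl⟩ h
    exact hau (smul_left_cancel (γ : G) (h.trans γ.2.symm))
  · intro hx
    obtain ⟨γ, hγa, hγu⟩ := is_two_pretransitive_iff.mp h2 hau hx
    exact ⟨⟨γ, hγu⟩, hγa⟩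

theorem IsBlock.ncard_fixedBy_lt_ncard_of_isCycle [Finite G] [Finite α]
    (h2 : IsMultiplyPretransitive G α 2) {g : G} (hg : (toPerm g : Perm α).IsCycle)
    {a : α} (ha : a ∈ fixedBy α g) {D : Set α} (hD : IsBlock (stabilizer G a) D)
    (hD1 : 1 < D.ncard) {u : α} (huD : u ∈ D) (hu : u ∈ (fixedBy α g)ᶜ) :
    (fixedBy α g).ncard < D.ncard := by
  have hm2 := two_le_ncard_compl_fixedBy hg
  have hua : u ≠ a := fun h => hu (h ▸ ha)
  set e := if D.ncard ∣ (fixedBy α g)ᶜ.ncard then (fixedBy α g)ᶜ.ncard / D.ncard else 1 with he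
  have he0 : 0 < e ∧ e < (fixedBy α g)ᶜ.ncard := by
    rw [he]
    split_ifs with hd
    · exact ⟨Nat.div_pos (Nat.le_of_dvd (by omega) hd) (by omega),
        Nat.div_lt_self (by omega) hD1⟩
    · omega
  have hv := pow_smul_ne_of_isCycle hg hu he0.1 he0.2
  have hkey : ∀ γ : stabilizer G u, γ • a ∈ fixedBy α g → γ⁻¹ • g ^ e • u ∈ D \ {u} := by
    intro γ hγa
    -- `γ • D` is a block of the stabilizer of `γ • a`, which contains `g`
    have huD' := Set.smul_mem_smul_set (a := (γ : G)) huD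
    rw [show (γ : G) • u = u from γ.2] at huD'
    have := (hD.smul_stabilizer γ).pow_smul_mem_of_isCycle (g := ⟨g, hγa⟩) hg huD' hu (e := e)
      (by
        intro hd
        change (γ • D).ncard ∣ (fixedBy α g)ᶜ.ncard at hd
        change (fixedBy α g)ᶜ.ncard / (γ • D).ncard ∣ e
        rw [Set.ncard_smul_set] at hd ⊢
        rw [he, if_pos hd])
    exact ⟨Set.mem_smul_set_iff_inv_smul_mem.mp this,
      fun h => hv ((inv_smul_eq_iff.mp h).trans γ.2)⟩
  have horbit := orbit_stabilizer_eq_compl_singleton h2 hua.symm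
  have := ncard_le_ncard_of_forall_smul_mem (horbit ▸ hv)
    (horbit ▸ fun x hx hxu => hu (hxu ▸ hx)) (horbit ▸ fun x hx => hx.2) hkey
  rw [Set.ncard_sdiff_singleton_of_mem huD] at this
  omega

theorem exists_mem_smul_of_ne (h2 : IsMultiplyPretransitive G α 2) {a : α} {B : Set α}
    (hB : B.Nonempty) (haB : a ∉ B) {x : α} (hx : x ≠ a) :
    ∃ γ : stabilizer G a, x ∈ γ • B := by
  obtain ⟨y, hy⟩ := hB
  rw [← Set.mem_compl_singleton_iff,
    ← orbit_stabilizer_eq_compl_singleton h2 (ne_of_mem_of_not_mem hy haB)] at hx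
  obtain ⟨γ, rfl⟩ := hx
  exact ⟨γ, Set.smul_mem_smul_set hy⟩

theorem IsBlock.inter_compl_fixedBy_nonempty [Finite G] [Finite α]
    (h2 : IsMultiplyPretransitive G α 2) {g : G} (hg : (toPerm g : Perm α).IsCycle)
    {a : α} (ha : a ∈ fixedBy α g) {B : Set α} (hB : IsBlock (stabilizer G a) B) (haB : a ∉ B)
    (hB1 : 1 < B.ncard) : (B ∩ (fixedBy α g)ᶜ).Nonempty := by
  by_contra hBS
  have hsub : B ⊆ fixedBy α g \ {a} := fun y hy =>
    ⟨not_not.mp fun hyS => hBS ⟨y, hy, hyS⟩, fun hya => haB (hya ▸ hy)⟩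
  have hle := Set.ncard_le_ncard hsub
  rw [Set.ncard_sdiff_singleton_of_mem ha] at hle
  obtain ⟨u, hu⟩ := Set.nonempty_of_ncard_ne_zero (s := (fixedBy α g)ᶜ)
    (by have := two_le_ncard_compl_fixedBy hg; omega)
  have hua : u ≠ a := fun h => hu (h ▸ ha)
  obtain ⟨γ, huB⟩ := exists_mem_smul_of_ne h2 (Set.nonempty_of_ncard_ne_zero (by omega)) haB hua
  have hlt := (hB.translate γ).ncard_fixedBy_lt_ncard_of_isCycle h2 hg ha
    (by rwa [Set.ncard_smul_set]) huB hu
  rw [Set.ncard_smul_set] at hlt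
  omega

theorem IsBlock.ncard_add_one_eq_of_isCycle [Finite G] [Finite α]
    (h2 : IsMultiplyPretransitive G α 2) {g : G} (hg : (toPerm g : Perm α).IsCycle)
    (hk : 2 ≤ (fixedBy α g).ncard) {a : α} (ha : a ∈ fixedBy α g) {B : Set α}
    (hB : IsBlock (stabilizer G a) B) (haB : a ∉ B) (hB1 : 1 < B.ncard) :
    B.ncard + 1 = Nat.card α := by
  have hBne : B.Nonempty := Set.nonempty_of_ncard_ne_zero (by omega)
  have hnot_a (γ : stabilizer G a) : a ∉ γ • B := fun ⟨y, hy, hya⟩ =>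
    haB (smul_left_cancel (γ : G) (hya.trans γ.2.symm) ▸ hy)
  have hmeet (γ : stabilizer G a) : (γ • B ∩ (fixedBy α g)ᶜ).Nonempty :=
    (hB.translate γ).inter_compl_fixedBy_nonempty h2 hg ha (hnot_a γ)
      (by rwa [Set.ncard_smul_set])
  obtain ⟨x, hxF, hxa⟩ : (fixedBy α g \ {a}).Nonempty :=
    Set.nonempty_of_ncard_ne_zero (by rw [Set.ncard_sdiff_singleton_of_mem ha]; omega)
  obtain ⟨γ₁, hxD⟩ := exists_mem_smul_of_ne h2 hBne haB hxa
  have hSD : (fixedBy α g)ᶜ ⊆ γ₁ • B :=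
    ((hB.translate γ₁).subset_or_subset_of_isCycle (g := ⟨g, ha⟩) hg (hmeet γ₁)).resolve_left
      fun h => h hxD hxF
  by_contra hne
  have hsub : γ₁ • B ⊆ {a}ᶜ := fun y hy hya => hnot_a γ₁ (hya ▸ hy)
  have hcompl := Set.ncard_add_ncard_compl {a}
  have hle := Set.ncard_le_ncard hsub
  rw [Set.ncard_singleton] at hcompl
  rw [Set.ncard_smul_set] at hle
  obtain ⟨y, hya, hyD⟩ : ({a}ᶜ \ γ₁ • B).Nonempty := by
    apply Set.nonempty_of_ncard_ne_zero
    rw [Set.ncard_sdiff hsub, Set.ncard_smul_set]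
    omega
  obtain ⟨γ₂, hyD₂⟩ := exists_mem_smul_of_ne h2 hBne haB hya
  obtain ⟨z, hzD, hzS⟩ := hmeet γ₂
  have : γ₂ • B = γ₁ • B := by
    by_contra h
    exact Set.disjoint_left.mp (hB h) hzD (hSD hzS)
  exact hyD (this ▸ hyD₂)

theorem isPreprimitive_ofStabilizer_of_isCycle [Finite G] [Finite α]
    (h2 : IsMultiplyPretransitive G α 2) {g : G} (hg : (toPerm g : Perm α).IsCycle)
    (hk : 2 ≤ (fixedBy α g).ncard) {a : α} (ha : a ∈ fixedBy α g) :
    IsPreprimitive (stabilizer G a) (ofStabilizer G a) := by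
  have : IsPretransitive G α := isPretransitive_of_is_two_pretransitive
  have : IsPretransitive (stabilizer G a) (ofStabilizer G a) :=
    is_one_pretransitive_iff.mp (ofStabilizer.isMultiplyPretransitive.mp h2)
  refine ⟨fun {B} hB => B.subsingleton_or_nontrivial.imp_right fun hB1 => ?_⟩
  have hcard : (Subtype.val '' B).ncard = B.ncard :=
    Set.ncard_image_of_injective _ Subtype.val_injective
  have := (isBlock_subtypeVal.mpr hB).ncard_add_one_eq_of_isCycle h2 hg hk ha
    (fun ⟨x, _, hx⟩ => x.2 hx) (hcard ▸ Set.one_lt_ncard_iff_nontrivial.mpr hB1)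
  rw [hcard, ← nat_card_ofStabilizer_add_one_eq G a, Nat.add_right_cancel_iff] at this
  exact Set.eq_of_subset_of_ncard_le (Set.subset_univ _) (by rw [Set.ncard_univ, this])

theorem _root_.SubMulAction.isCycle_toPerm {p : SubMulAction G α} {g : G}
    (hg : (toPerm g : Perm α).IsCycle) (hp : (fixedBy α g)ᶜ ⊆ p) :
    (toPerm g : Perm p).IsCycle := by
  obtain ⟨x, hx, hxy⟩ := hg
  refine ⟨⟨x, hp hx⟩, fun h => hx (congrArg Subtype.val h), fun y hy => ?_⟩
  obtain ⟨i, hi⟩ := hxy fun h => hy (Subtype.ext h)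
  refine ⟨i, Subtype.ext ?_⟩
  rw [toPerm_zpow_apply] at hi ⊢
  exact hi

theorem ncard_fixedBy_ofStabilizer [Finite α] {g : G} {a : α} (ha : a ∈ fixedBy α g) :
    (fixedBy (ofStabilizer G a) (⟨g, ha⟩ : stabilizer G a)).ncard = (fixedBy α g).ncard - 1 := by
  have : fixedBy (ofStabilizer G a) (⟨g, ha⟩ : stabilizer G a) =
      Subtype.val ⁻¹' (fixedBy α g \ {a}) := by
    ext x
    simp only [Set.mem_preimage, mem_fixedBy, Subtype.ext_iff, SetLike.val_smul,
      Set.mem_sdiff, Set.mem_singleton_iff]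
    exact (and_iff_left x.2).symm
  rw [this, Set.ncard_preimage_of_injective_subset_range Subtype.val_injective
    fun y hy => ⟨⟨y, hy.2⟩, rfl⟩, Set.ncard_sdiff_singleton_of_mem ha]

theorem IsPreprimitive.isMultiplyPretransitive_two_of_isCycle [Finite α]
    (hG : IsPreprimitive G α) {g : G} (hg : (toPerm g : Perm α).IsCycle)
    (hk : 1 ≤ (fixedBy α g).ncard) : IsMultiplyPretransitive G α 2 := by
  obtain ⟨n, hn⟩ := Nat.exists_eq_add_of_le' hk
  have hFS := Set.ncard_add_ncard_compl (fixedBy α g)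
  have hm2 := two_le_ncard_compl_fixedBy hg
  refine hG.is_two_pretransitive hn (by omega) ⟨fun x y => ?_⟩
  obtain ⟨i, hi⟩ := hg.exists_zpow_eq x.2 y.2
  refine ⟨⟨g ^ i, (mem_fixingSubgroup_iff G).mpr fun z hz => mem_fixedBy_zpow hz i⟩, Subtype.ext ?_⟩
  rw [← hi, toPerm_zpow_apply]
  rfl

theorem IsPreprimitive.isMultiplyPretransitive_of_isCycle (k : ℕ) [Finite G] [Finite α]
    (hG : IsPreprimitive G α) {g : G} (hg : (toPerm g : Perm α).IsCycle)
    (hk : (fixedBy α g).ncard = k) : IsMultiplyPretransitive G α (k + 1) := by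
  induction k generalizing G α with
  | zero => exact is_one_pretransitive_iff.mpr inferInstance
  | succ k ih =>
    have h2 := hG.isMultiplyPretransitive_two_of_isCycle hg (by omega)
    rcases k with _ | k
    · exact h2
    obtain ⟨a, ha⟩ := Set.nonempty_of_ncard_ne_zero (s := fixedBy α g) (by omega)
    have : IsPretransitive G α := isPretransitive_of_is_two_pretransitive
    rw [ofStabilizer.isMultiplyPretransitive (a := a)]
    exact ih (isPreprimitive_ofStabilizer_of_isCycle h2 hg (by omega) ha)
      (SubMulAction.isCycle_toPerm (g := (⟨g, ha⟩ : stabilizer G a)) hg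
        fun x hx hxa => hx (hxa ▸ ha))
      (by rw [ncard_fixedBy_ofStabilizer, hk]; rfl)

end MulAction

/-- **Jordan (often attributed to Marggraff).** A primitive permutation group of finite degree
containing a cycle fixing exactly `k` points is `(k+1)`-transitive. -/
theorem jordan_marggraff (Ω : Type*) [Fintype Ω] [DecidableEq Ω]
    (G : Subgroup (Equiv.Perm Ω)) (hG : IsPreprimitive G Ω)
    (k : ℕ) (g : Equiv.Perm Ω) (hg : g ∈ G) (hc : g.IsCycle)
    (hfix : g.supportᶜ.card = k) :
    IsMultiplyPretransitive G Ω (k + 1) := by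
  have : MulAction.IsPretransitive G Ω := hG.1
  have hG' : MulAction.IsPreprimitive G Ω := ⟨fun hB => hG.2 _ hB⟩
  refine hG'.isMultiplyPretransitive_of_isCycle k (g := ⟨g, hg⟩) hc ?_
  rw [← hfix, ← Set.ncard_coe_finset]
  congr
  ext x
  simp [Equiv.Perm.mem_support]
end

section
/- Let G be a primitive permutation group of finite degree n, and let Γ be a subgroup of G whose non-identity elements move exactly the points of a subset S of size p (i.e., the support of Γ is S), such that Γ acts primitively on S. Then G is (n − p + 1)-transitive on the n points. -/
/-!
Γ fixes the `n - p` points of `Sᶜ`, so the pointwise stabiliser of `Sᶜ` in `G` contains Γ and is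
therefore transitive and primitive on `S`. Jordan's criterion (Wielandt, Thm. 13.2,
`MulAction.IsPreprimitive.isMultiplyPreprimitive`) turns this into `(n - p + 1)`-fold
primitivity of `G` once `n - p ≥ 1` and `p ≥ 2`; the latter holds because no group of
permutations has a support of exactly one point. The cases `S = ∅` (there are no `n + 1`
distinct points) and `S = Ω` (plain transitivity) are immediate.
-/

open MulAction SubMulAction in
theorem isPreprimitive_ofFixingSubgroup_compl {Ω : Type*}
    {G Γ : Subgroup (Equiv.Perm Ω)} (hΓG : Γ ≤ G) {S : Set Ω}
    (hfix : ∀ γ ∈ Γ, ∀ x ∉ S, γ x = x)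
    (htrans : ∀ x ∈ S, ∀ y ∈ S, ∃ γ ∈ Γ, γ x = y)
    (hprim : ∀ B ⊆ S, (∀ γ ∈ Γ, ⇑γ '' B = B ∨ Disjoint (⇑γ '' B) B) →
      B.Subsingleton ∨ B = S) :
    MulAction.IsPreprimitive (fixingSubgroup G Sᶜ) (ofFixingSubgroup G Sᶜ) := by
  have lift : ∀ γ ∈ Γ, ∃ g : fixingSubgroup G Sᶜ, ((g : G) : Equiv.Perm Ω) = γ :=
    fun γ hγ => ⟨⟨⟨γ, hΓG hγ⟩, fun x => hfix γ hγ x x.2⟩, rfl⟩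
  have hmem (x : ofFixingSubgroup G Sᶜ) : (x : Ω) ∈ S := by
    simpa using (mem_ofFixingSubgroup_iff G).mp x.2
  refine { exists_smul_eq := fun x y => ?_, isTrivialBlock_of_isBlock := fun {B} hB => ?_ }
  · obtain ⟨γ, hγ, hxy⟩ := htrans x (hmem x) y (hmem y)
    obtain ⟨g, rfl⟩ := lift γ hγ
    exact ⟨g, Subtype.ext hxy⟩
  · have hblock := isBlock_iff_smul_eq_or_disjoint.mp (isBlock_subtypeVal.mpr hB)
    have hquasi : ∀ γ ∈ Γ, ⇑γ '' (Subtype.val '' B) = Subtype.val '' B ∨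
        Disjoint (⇑γ '' (Subtype.val '' B)) (Subtype.val '' B) := by
      intro γ hγ
      obtain ⟨g, rfl⟩ := lift γ hγ
      exact hblock g
    rcases hprim _ (by rintro _ ⟨x, -, rfl⟩; exact hmem x) hquasi with h | h
    · exact Or.inl (Subtype.val_injective.subsingleton_image_iff.mp h)
    · refine Or.inr (Set.eq_univ_of_forall fun x => ?_)
      obtain ⟨y, hy, hyx⟩ : (x : Ω) ∈ Subtype.val '' B := h.symm ▸ hmem x
      exact Subtype.ext hyx ▸ hy

theorem ncard_setOf_apply_ne_ne_one {Ω : Type*} (Γ : Subgroup (Equiv.Perm Ω)) :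
    {x : Ω | ∃ γ ∈ Γ, γ x ≠ x}.ncard ≠ 1 := by
  intro h
  obtain ⟨a, ha⟩ := Set.ncard_eq_one.mp h
  obtain ⟨γ, hγ, hmove⟩ : a ∈ {x : Ω | ∃ γ ∈ Γ, γ x ≠ x} := ha ▸ rfl
  have : γ a ∈ {x : Ω | ∃ γ ∈ Γ, γ x ≠ x} := ⟨γ, hγ, γ.injective.ne hmove⟩
  rw [ha] at this
  exact hmove this

theorem isMultiplyPretransitive_of_card_lt {G α : Type*} [Group G] [MulAction G α] [Fintype α]
    {k : ℕ} (hk : Fintype.card α < k) : MulAction.IsMultiplyPretransitive G α k :=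
  have : IsEmpty (Fin k ↪ α) := Function.Embedding.isEmpty_of_card_lt (by simpa using hk)
  inferInstance

theorem jordan_primitive_subgroup_general (Ω : Type*) [Fintype Ω] (n : ℕ)
    (hn : Fintype.card Ω = n)
    (G : Subgroup (Equiv.Perm Ω)) (hG : IsPreprimitive G Ω)
    (Γ : Subgroup (Equiv.Perm Ω)) (hΓG : Γ ≤ G)
    (S : Set Ω) (p : ℕ) (hScard : S.ncard = p)
    (hsupp : S = {x : Ω | ∃ γ ∈ Γ, γ x ≠ x})
    (htrans : ∀ x ∈ S, ∀ y ∈ S, ∃ γ ∈ Γ, γ x = y)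
    (hprim : ∀ B ⊆ S, (∀ γ ∈ Γ, ⇑γ '' B = B ∨ Disjoint (⇑γ '' B) B) →
      B.Subsingleton ∨ B = S) :
    IsMultiplyPretransitive G Ω (n - p + 1) := by
  have hfix : ∀ γ ∈ Γ, ∀ x ∉ S, γ x = x := fun γ hγ x hx => by
    by_contra h
    exact hx (hsupp ▸ ⟨γ, hγ, h⟩)
  have hp₁ : p ≠ 1 := hScard ▸ hsupp ▸ ncard_setOf_apply_ne_ne_one Γ
  have hcompl : Sᶜ.ncard + p = n := by
    rw [← hn, ← hScard, add_comm, Set.ncard_add_ncard_compl, Nat.card_eq_fintype_card]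
  obtain rfl | hp := Nat.eq_zero_or_pos p
  · exact isMultiplyPretransitive_of_card_lt (by omega)
  rcases hm : n - p with _ | m
  · exact MulAction.is_one_pretransitive_iff.mpr hG.1
  have hGprim : MulAction.IsPreprimitive G Ω :=
    { hG.1 with isTrivialBlock_of_isBlock := hG.2 _ }
  have hGmult := hGprim.isMultiplyPreprimitive (s := Sᶜ) (n := m) (by omega)
    (by rw [Nat.card_eq_fintype_card]; omega)
    (isPreprimitive_ofFixingSubgroup_compl hΓG hfix htrans hprim)
  exact hGmult.isMultiplyPretransitive

/-- **Jordan's Théorème I (last sentence).** If a primitive group `G` of degree `n` contains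
a subgroup `Γ` whose support is a set `S` of size `p`, and `Γ` acts primitively on `S`
(transitively, preserving no nontrivial partition of `S`), then `G` is
`(n - p + 1)`-transitive. -/
theorem jordan_primitive_subgroup (Ω : Type*) [Fintype Ω] [DecidableEq Ω] (n : ℕ)
    (hn : Fintype.card Ω = n)
    (G : Subgroup (Equiv.Perm Ω)) (hG : IsPreprimitive G Ω)
    (Γ : Subgroup (Equiv.Perm Ω)) (hΓG : Γ ≤ G)
    (S : Set Ω) (p : ℕ) (hScard : S.ncard = p)
    (hsupp : S = {x : Ω | ∃ γ ∈ Γ, γ x ≠ x})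
    (htrans : ∀ x ∈ S, ∀ y ∈ S, ∃ γ ∈ Γ, γ x = y)
    (hprim : ∀ B ⊆ S, (∀ γ ∈ Γ, ⇑γ '' B = B ∨ Disjoint (⇑γ '' B) B) →
      B.Subsingleton ∨ B = S) :
    IsMultiplyPretransitive G Ω (n - p + 1) :=
  jordan_primitive_subgroup_general Ω n hn G hG Γ hΓG S p hScard hsupp htrans hprim
end

section
/- Let p be an odd prime and k an integer with k > 2, and let G be a permutation group of degree n = p + k. If G is (k+1)-transitive, then G contains the alternating group A_n. -/
/-!
Choose a set `s` of `k` points; its complement has `p` points. The pointwise stabilizer `H` of `s`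
in `G` is transitive on `sᶜ`, so it contains an element `c` of order `p`, a `p`-cycle on `sᶜ`, and
`⟨c⟩` is a Sylow subgroup of `H` because `|H|` divides `p!`. By a Frattini argument every
permutation of `s` is induced by an element of `G` normalizing `⟨c⟩` (Witt). Let `a`, `b` induce
the transpositions `(x y)` and `(y z)` of `s`. Their commutator centralizes `c`, since the
automorphisms of a cyclic group commute, so on `sᶜ` it acts as a power of `c`; dividing out that
power leaves the 3-cycle `⁅(x y), (y z)⁆` in `G`. A primitive group containing a 3-cycle contains
the alternating group (Jordan), and `G` is 2-transitive, hence primitive.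
-/

open Equiv Subgroup
open MulAction hiding IsMultiplyPretransitive
open scoped commutatorElement Pointwise Nat

theorem Nat.Prime.not_sq_dvd_factorial {p : ℕ} (hp : p.Prime) : ¬ p ^ 2 ∣ p ! := by
  rw [← Nat.mul_factorial_pred hp.ne_zero, sq]
  intro h
  have := hp.dvd_factorial.mp (Nat.dvd_of_mul_dvd_mul_left hp.pos h)
  have := hp.pos
  omega

section GroupTheory

variable {G : Type*} [Group G]

theorem commutatorElement_mul_mul_of_commute {a b x y : G}
    (hxa : Commute x a) (hxb : Commute x b) (hya : Commute y a) (hyb : Commute y b) :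
    ⁅a * x, b * y⁆ = ⁅a, b⁆ * ⁅x, y⁆ := by
  simp only [commutatorElement_def, mul_inv_rev]
  have h1 : Commute (x * y * x⁻¹) a⁻¹ := ((hxa.mul_left hya).mul_left hxa.inv_left).inv_right
  have h2 : Commute (x * y * x⁻¹ * y⁻¹) b⁻¹ :=
    (((hxb.mul_left hyb).mul_left hxb.inv_left).mul_left hyb.inv_left).inv_right
  calc a * x * (b * y) * (x⁻¹ * a⁻¹) * (y⁻¹ * b⁻¹)
      = a * (x * b) * y * x⁻¹ * a⁻¹ * y⁻¹ * b⁻¹ := by group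
    _ = a * b * (x * y * x⁻¹ * a⁻¹) * y⁻¹ * b⁻¹ := by rw [hxb.eq]; group
    _ = a * b * a⁻¹ * (x * y * x⁻¹ * y⁻¹ * b⁻¹) := by rw [h1.eq]; group
    _ = a * b * a⁻¹ * b⁻¹ * (x * y * x⁻¹ * y⁻¹) := by rw [h2.eq]; group

theorem exists_conj_eq_zpow_of_mem_normalizer_zpowers {c g : G}
    (hg : g ∈ normalizer (zpowers c : Set G)) : ∃ n : ℤ, ∀ x ∈ zpowers c, g * x * g⁻¹ = x ^ n := by
  obtain ⟨n, hn⟩ := mem_zpowers_iff.mp ((mem_normalizer_iff.mp hg c).mp (mem_zpowers c))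
  refine ⟨n, ?_⟩
  rintro _ ⟨m, rfl⟩
  rw [← conj_zpow, ← hn, ← zpow_mul, ← zpow_mul, mul_comm]

/-- The normalizer of a cyclic subgroup acts on it by power maps, which commute with each other. -/
theorem commute_commutatorElement_of_mem_normalizer_zpowers {a b c : G}
    (ha : a ∈ normalizer (zpowers c : Set G)) (hb : b ∈ normalizer (zpowers c : Set G)) :
    Commute ⁅a, b⁆ c := by
  obtain ⟨s, hs⟩ := exists_conj_eq_zpow_of_mem_normalizer_zpowers ha
  obtain ⟨s', hs'⟩ := exists_conj_eq_zpow_of_mem_normalizer_zpowers (inv_mem ha)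
  obtain ⟨t, ht⟩ := exists_conj_eq_zpow_of_mem_normalizer_zpowers hb
  obtain ⟨t', ht'⟩ := exists_conj_eq_zpow_of_mem_normalizer_zpowers (inv_mem hb)
  have hmem (n : ℤ) : c ^ n ∈ zpowers c := zpow_mem (mem_zpowers c) n
  -- conjugating by `a⁻¹` and then by `a` is the identity
  have hss : c ^ (s' * s) = c := by
    rw [zpow_mul, ← hs _ (hmem s'), ← zpow_one c, ← hs' _ (hmem 1)]
    group
  have htt : c ^ (t' * t) = c := by
    rw [zpow_mul, ← ht _ (hmem t'), ← zpow_one c, ← ht' _ (hmem 1)]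
    group
  have hconj : ⁅a, b⁆ * c * ⁅a, b⁆⁻¹ = c :=
    calc ⁅a, b⁆ * c * ⁅a, b⁆⁻¹
        = a * (b * (a⁻¹ * (b⁻¹ * c * b⁻¹⁻¹) * a⁻¹⁻¹) * b⁻¹) * a⁻¹ := by
          rw [commutatorElement_def]; group
      _ = c ^ (s' * s * (t' * t)) := by
          rw [ht' _ (mem_zpowers c), hs' _ (hmem t'), ← zpow_mul, ht _ (hmem _), ← zpow_mul,
            hs _ (hmem _), ← zpow_mul]
          ring_nf
      _ = c := by rw [zpow_mul, hss, htt]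
  exact mul_inv_eq_iff_eq_mul.mp hconj

theorem mem_normalizer_zpowers_of_conj_mem {c g : G} (hc : IsOfFinOrder c)
    (hg : g * c * g⁻¹ ∈ zpowers c) : g ∈ normalizer (zpowers c : Set G) := by
  have : Finite (zpowers c) := hc.finite_zpowers
  rw [mem_normalizer_iff_map_conj_eq, MonoidHom.map_zpowers]
  refine eq_of_le_of_card_ge (zpowers_le.mpr hg) ?_
  rw [Nat.card_zpowers, Nat.card_zpowers]
  exact (MulEquiv.orderOf_eq (MulAut.conj g) c).ge

variable {p : ℕ} [Fact p.Prime]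

theorem exists_conj_mem_zpowers_of_orderOf_eq [Finite G] (hG : ¬ p ^ 2 ∣ Nat.card G) {x y : G}
    (hx : orderOf x = p) (hy : orderOf y = p) : ∃ g : G, g * x * g⁻¹ ∈ zpowers y := by
  have hpgroup {z : G} (hz : orderOf z = p) : IsPGroup p (zpowers z) :=
    IsPGroup.of_card (n := 1) (by rw [Nat.card_zpowers, hz, pow_one])
  obtain ⟨P, hxP⟩ := (hpgroup hx).exists_le_sylow
  obtain ⟨Q, hyQ⟩ := (hpgroup hy).exists_le_sylow
  have hQ : (Q : Subgroup G) = zpowers y := by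
    refine (eq_of_le_of_card_ge hyQ ?_).symm
    obtain ⟨n, hn⟩ := Q.isPGroup'.exists_card_eq
    have hn1 : n ≤ 1 := by
      by_contra! h
      exact hG ((pow_dvd_pow p h).trans (hn ▸ Q.card_subgroup_dvd_card))
    rw [hn, Nat.card_zpowers, hy]
    exact (Nat.pow_le_pow_right (Fact.out : p.Prime).pos hn1).trans_eq (pow_one p)
  obtain ⟨g, rfl⟩ := MulAction.exists_smul_eq G P Q
  refine ⟨g, hQ ▸ ?_⟩
  rw [Sylow.coe_subgroup_smul]
  exact smul_mem_pointwise_smul x (MulAut.conj g) (P : Subgroup G) (hxP (mem_zpowers x))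

/-- A Frattini argument for a subgroup whose Sylow `p`-subgroups have order `p`. -/
theorem exists_mul_mem_normalizer_zpowers {H : Subgroup G} [Finite H]
    (hH : ¬ p ^ 2 ∣ Nat.card H) {c g : G} (hc : c ∈ H) (hcp : orderOf c = p)
    (hg : g ∈ normalizer (H : Set G)) : ∃ h ∈ H, h * g ∈ normalizer (zpowers c : Set G) := by
  have hd : g * c * g⁻¹ ∈ H := (mem_normalizer_iff.mp hg c).mp hc
  have hdp : orderOf (g * c * g⁻¹) = p := by
    rw [← MulAut.conj_apply, MulEquiv.orderOf_eq, hcp]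
  obtain ⟨h, hh⟩ := exists_conj_mem_zpowers_of_orderOf_eq hH (x := ⟨_, hd⟩) (y := ⟨c, hc⟩)
    (by rw [orderOf_mk, hdp]) (by rw [orderOf_mk, hcp])
  refine ⟨h, h.2, mem_normalizer_zpowers_of_conj_mem ?_ ?_⟩
  · exact orderOf_pos_iff.mp (hcp ▸ (Fact.out : p.Prime).pos)
  · have := mem_map_of_mem H.subtype hh
    rw [MonoidHom.map_zpowers] at this
    simpa [mul_assoc] using this

end GroupTheory

namespace MulAction

variable {M α : Type*} [Group M] [MulAction M α]

theorem IsMultiplyPretransitive.exists_smul_eq_of_injOn {s : Set α} (hs : s.Finite)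
    (hM : IsMultiplyPretransitive M α s.ncard) {f : α → α} (hf : s.InjOn f) :
    ∃ g : M, ∀ x ∈ s, g • x = f x := by
  have : Finite s := hs
  let e : s ≃ Fin s.ncard := Finite.equivFin s
  let x : Fin s.ncard ↪ α := e.symm.toEmbedding.trans (Function.Embedding.subtype _)
  let y : Fin s.ncard ↪ α := ⟨fun i => f (e.symm i), fun i j h =>
    e.symm.injective (Subtype.ext (hf (e.symm i).2 (e.symm j).2 h))⟩
  obtain ⟨g, hg⟩ := hM.exists_smul_eq x y
  refine ⟨g, fun a ha => ?_⟩
  have : g • a = y (e ⟨a, ha⟩) := by simpa [x] using DFunLike.congr_fun hg (e ⟨a, ha⟩)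
  exact this.trans (congrArg f (congrArg Subtype.val (e.symm_apply_apply _)))

theorem ncard_compl_dvd_card_fixingSubgroup [Finite M] {s : Set α} [Finite s]
    [IsMultiplyPretransitive M α (s.ncard + 1)] (hs : sᶜ.Nonempty) :
    sᶜ.ncard ∣ Nat.card (fixingSubgroup M s) := by
  have := SubMulAction.ofFixingSubgroup.isMultiplyPretransitive (m := 1) M s rfl
  have := is_one_pretransitive_iff.mp this
  obtain ⟨a, ha⟩ := hs
  have h := index_stabilizer_of_transitive (fixingSubgroup M s)
    (⟨a, ha⟩ : SubMulAction.ofFixingSubgroup M s)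
  have hcard : Nat.card (SubMulAction.ofFixingSubgroup M s) = sᶜ.ncard := rfl
  rw [← hcard, ← h]
  exact index_dvd_card _

end MulAction

namespace Equiv.Perm

variable {α : Type*}

theorem disjoint_of_mem_fixingSubgroup_of_mem_fixingSubgroup_compl {s : Set α} {f g : Perm α}
    (hf : f ∈ fixingSubgroup (Perm α) s) (hg : g ∈ fixingSubgroup (Perm α) sᶜ) :
    Disjoint f g := by
  intro x
  by_cases hx : x ∈ s
  · exact Or.inl (hf ⟨x, hx⟩)
  · exact Or.inr (hg ⟨x, hx⟩)

theorem swap_mem_fixingSubgroup [DecidableEq α] {s : Set α} {x y : α} (hx : x ∉ s) (hy : y ∉ s) :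
    swap x y ∈ fixingSubgroup (Perm α) s := fun z =>
  swap_apply_of_ne_of_ne (ne_of_mem_of_not_mem z.2 hx) (ne_of_mem_of_not_mem z.2 hy)

section Finite

variable [Finite α]

theorem card_fixingSubgroup (s : Set α) :
    Nat.card (fixingSubgroup (Perm α) s) = sᶜ.ncard ! := by
  have hindex := (Equiv.Perm.isMultiplyPretransitive α s.ncard).index_of_fixingSubgroup_mul rfl
  have hcard := (fixingSubgroup (Perm α) s).index_mul_card
  rw [Nat.card_perm, ← Set.ncard_add_ncard_compl s] at hcard
  rw [← Set.ncard_add_ncard_compl s, Nat.add_sub_cancel_left] at hindex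
  exact Nat.eq_of_mul_eq_mul_left (Nat.pos_of_ne_zero index_ne_zero_of_finite)
    (hcard.trans hindex.symm)

theorem card_fixingSubgroup_dvd (G : Subgroup (Perm α)) (s : Set α) :
    Nat.card (fixingSubgroup G s) ∣ sᶜ.ncard ! := by
  rw [← card_fixingSubgroup, ← card_map_of_injective G.subtype_injective]
  exact card_dvd_of_le fun _ ⟨g, hg, hgx⟩ => hgx ▸ hg

/-- **Witt's lemma.** Here `σ⁻¹ * a ∈ fixingSubgroup (Perm α) s` says that `a` acts on `s`
as `σ`. -/
theorem exists_mem_normalizer_zpowers_inv_mul_mem_fixingSubgroup {G : Subgroup (Perm α)}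
    {s : Set α} (hG : MulAction.IsMultiplyPretransitive G α s.ncard) {p : ℕ} [Fact p.Prime]
    (hs : sᶜ.ncard = p) {c : G} (hc : c ∈ fixingSubgroup G s) (hcp : orderOf c = p)
    {σ : Perm α} (hσ : σ ∈ fixingSubgroup (Perm α) sᶜ) :
    ∃ a ∈ normalizer (zpowers c : Set G), σ⁻¹ * (a : Perm α) ∈ fixingSubgroup (Perm α) s := by
  obtain ⟨g, hg⟩ := hG.exists_smul_eq_of_injOn s.toFinite σ.injective.injOn
  have hσs : σ • s = s := by
    have : σ • sᶜ = sᶜ := fixingSubgroup_le_stabilizer _ _ hσ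
    rwa [Set.smul_set_compl, compl_inj_iff] at this
  have hgs : g • s = s := (Set.image_congr hg).trans hσs
  have hgH : g ∈ normalizer (fixingSubgroup G s : Set G) :=
    mem_normalizer_iff_map_conj_eq.mpr (SubMulAction.fixingSubgroup_map_conj_eq hgs)
  have hH : ¬ p ^ 2 ∣ Nat.card (fixingSubgroup G s) := fun h =>
    (Fact.out : p.Prime).not_sq_dvd_factorial (h.trans (hs ▸ card_fixingSubgroup_dvd G s))
  obtain ⟨h, hh, hhg⟩ := exists_mul_mem_normalizer_zpowers hH hc hcp hgH
  refine ⟨h * g, hhg, fun x => ?_⟩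
  have hσx : σ x ∈ s := by simpa only [hσs, Perm.smul_def] using Set.smul_mem_smul_set (a := σ) x.2
  have hgx : (g : Perm α) x = σ x := hg x x.2
  have hhx : (h : Perm α) (σ x) = σ x := hh ⟨σ x, hσx⟩
  simp [Perm.smul_def, hgx, hhx]

end Finite

variable [Fintype α] [DecidableEq α]

theorem isCycle_of_mem_fixingSubgroup {c : Perm α} {s : Set α}
    (hc : c ∈ fixingSubgroup (Perm α) s) (hcp : (orderOf c).Prime) (hs : sᶜ.ncard = orderOf c) :
    c.IsCycle ∧ (c.support : Set α) = sᶜ := by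
  have hsupp : (c.support : Set α) ⊆ sᶜ := fun x hx hxs => mem_support.mp hx (hc ⟨x, hxs⟩)
  have hle : c.support.card ≤ orderOf c := by
    rw [← hs, ← Set.ncard_coe_finset]
    exact Set.ncard_le_ncard hsupp
  have hcyc : c.IsCycle := isCycle_of_prime_order hcp (by have := hcp.pos; omega)
  refine ⟨hcyc, Set.eq_of_subset_of_ncard_le hsupp ?_⟩
  rw [Set.ncard_coe_finset, ← hcyc.orderOf, hs]

theorem exists_isCycle_mem_fixingSubgroup {G : Subgroup (Perm α)} {s : Set α}
    [MulAction.IsMultiplyPretransitive G α (s.ncard + 1)] {p : ℕ} [hp : Fact p.Prime]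
    (hs : sᶜ.ncard = p) :
    ∃ c ∈ fixingSubgroup G s, orderOf c = p ∧ (c : Perm α).IsCycle ∧
      ((c : Perm α).support : Set α) = sᶜ := by
  obtain ⟨⟨c, hc⟩, hcp⟩ := exists_prime_orderOf_dvd_card' (G := fixingSubgroup G s) p
    (hs ▸ ncard_compl_dvd_card_fixingSubgroup (Set.nonempty_of_ncard_ne_zero (hs ▸ hp.out.ne_zero)))
  rw [orderOf_mk] at hcp
  exact ⟨c, hc, hcp, isCycle_of_mem_fixingSubgroup (c := (c : Perm α)) hc
    (by rw [orderOf_coe, hcp]; exact hp.out) (by rw [orderOf_coe, hcp, hs])⟩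

theorem mem_fixingSubgroup_compl_support (c : Perm α) :
    c ∈ fixingSubgroup (Perm α) (c.support : Set α)ᶜ := fun x =>
  notMem_support.mp x.2

theorem IsCycle.mem_zpowers_of_commute {c g : Perm α} (hc : c.IsCycle) (hgc : Commute g c)
    (hg : g ∈ fixingSubgroup (Perm α) (c.support : Set α)ᶜ) : g ∈ zpowers c := by
  obtain ⟨hc', hgc'⟩ := hc.commute_iff.mp hgc
  rwa [ofSubtype_subtypePerm] at hgc'
  intro x hx
  by_contra h
  exact hx (hg ⟨x, h⟩)

/-- Write `a = σ * x` and `b = ρ * y` with `x`, `y` supported in the support of `c`: then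
`⁅a, b⁆ = ⁅σ, ρ⁆ * ⁅x, y⁆`, and `⁅x, y⁆` centralizes the cycle `c` on its support. -/
theorem IsCycle.exists_commutatorElement_eq_mul_zpow {c a b σ ρ : Perm α} (hc : c.IsCycle)
    (hab : Commute ⁅a, b⁆ c) (hσ : σ ∈ fixingSubgroup (Perm α) (c.support : Set α))
    (hρ : ρ ∈ fixingSubgroup (Perm α) (c.support : Set α))
    (ha : σ⁻¹ * a ∈ fixingSubgroup (Perm α) (c.support : Set α)ᶜ)
    (hb : ρ⁻¹ * b ∈ fixingSubgroup (Perm α) (c.support : Set α)ᶜ) :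
    ∃ i : ℤ, ⁅σ, ρ⁆ = ⁅a, b⁆ * c ^ i := by
  have hcomm {f g : Perm α} (hf : f ∈ fixingSubgroup (Perm α) (c.support : Set α))
      (hg : g ∈ fixingSubgroup (Perm α) (c.support : Set α)ᶜ) : Commute g f :=
    (disjoint_of_mem_fixingSubgroup_of_mem_fixingSubgroup_compl hf hg).commute.symm
  have hmem {H : Subgroup (Perm α)} {f g : Perm α} (hf : f ∈ H) (hg : g ∈ H) : ⁅f, g⁆ ∈ H :=
    mul_mem (mul_mem (mul_mem hf hg) (inv_mem hf)) (inv_mem hg)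
  have hsplit : ⁅a, b⁆ = ⁅σ, ρ⁆ * ⁅σ⁻¹ * a, ρ⁻¹ * b⁆ := by
    conv_lhs => rw [← mul_inv_cancel_left σ a, ← mul_inv_cancel_left ρ b]
    exact commutatorElement_mul_mul_of_commute (hcomm hσ ha) (hcomm hρ ha) (hcomm hσ hb)
      (hcomm hρ hb)
  have hxy : ⁅σ⁻¹ * a, ρ⁻¹ * b⁆ ∈ zpowers c := by
    refine hc.mem_zpowers_of_commute ?_ (hmem ha hb)
    rw [eq_inv_mul_of_mul_eq hsplit.symm]
    exact (hcomm (hmem hσ hρ) (mem_fixingSubgroup_compl_support c)).symm.inv_left.mul_left hab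
  obtain ⟨i, hi⟩ := mem_zpowers_iff.mp hxy
  exact ⟨-i, by rw [hsplit, zpow_neg, hi, mul_inv_cancel_right]⟩

theorem isThreeCycle_commutatorElement_swap_swap {x y z : α} (hxy : x ≠ y) (hxz : x ≠ z)
    (hyz : y ≠ z) : IsThreeCycle ⁅swap x y, swap y z⁆ := by
  have h : ⁅swap x y, swap y z⁆ = (swap y x * swap y z) ^ 2 := by
    rw [commutatorElement_def, swap_inv, swap_inv, swap_comm x y, sq, mul_assoc _ (swap y x)]
  rw [h]
  exact (isThreeCycle_swap_mul_swap_same hxy.symm hyz hxz).isThreeCycle_sq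

theorem exists_isThreeCycle_mem_of_isMultiplyPretransitive {G : Subgroup (Perm α)} {s : Set α}
    [MulAction.IsMultiplyPretransitive G α (s.ncard + 1)] (hs : sᶜ.ncard.Prime)
    (hs3 : 2 < s.ncard) : ∃ g ∈ G, g.IsThreeCycle := by
  have := Fact.mk hs
  obtain ⟨c, hc, hcp, hcyc, hsupp⟩ := exists_isCycle_mem_fixingSubgroup (G := G) (s := s) rfl
  have hGs : MulAction.IsMultiplyPretransitive G α s.ncard :=
    isMultiplyPretransitive_of_le (n := s.ncard + 1) (by omega)
      (by have := Set.ncard_add_ncard_compl s; have := hs.pos; omega)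
  have hswap {u v : α} (hu : u ∈ s) (hv : v ∈ s) : swap u v ∈ fixingSubgroup (Perm α) sᶜ :=
    swap_mem_fixingSubgroup (not_not.mpr hu) (not_not.mpr hv)
  obtain ⟨x, y, z, hx, hy, hz, hxy, hxz, hyz⟩ := (Set.two_lt_ncard_iff s.toFinite).mp hs3
  obtain ⟨a, ha, has⟩ :=
    exists_mem_normalizer_zpowers_inv_mul_mem_fixingSubgroup hGs rfl hc hcp (hswap hx hy)
  obtain ⟨b, hb, hbs⟩ :=
    exists_mem_normalizer_zpowers_inv_mul_mem_fixingSubgroup hGs rfl hc hcp (hswap hy hz)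
  rw [← compl_compl s, ← hsupp] at has hbs
  rw [← hsupp] at hswap
  obtain ⟨i, hi⟩ := hcyc.exists_commutatorElement_eq_mul_zpow
    ((commute_commutatorElement_of_mem_normalizer_zpowers ha hb).map G.subtype)
    (hswap hx hy) (hswap hy hz) has hbs
  exact ⟨_, hi ▸ (⁅a, b⁆ * c ^ i).2, isThreeCycle_commutatorElement_swap_swap hxy hxz hyz⟩

end Equiv.Perm

theorem jordan_transitivity_bound_general (Ω : Type*) [Fintype Ω] [DecidableEq Ω]
    (p k : ℕ) (hp : p.Prime) (hk : 2 < k)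
    (hn : Fintype.card Ω = p + k)
    (G : Subgroup (Equiv.Perm Ω))
    (hG : IsMultiplyPretransitive G Ω (k + 1)) :
    alternatingGroup Ω ≤ G := by
  have := hp.pos
  rw [← Nat.card_eq_fintype_card] at hn
  obtain ⟨s, -, hs⟩ := Set.exists_subset_card_eq (s := (Set.univ : Set Ω)) (n := k)
    (by rw [Set.ncard_univ]; omega)
  have hsc : sᶜ.ncard = p := by have := Set.ncard_add_ncard_compl s; omega
  have : MulAction.IsMultiplyPretransitive G Ω (s.ncard + 1) := hs ▸ hG
  obtain ⟨g, hgG, hg⟩ := Perm.exists_isThreeCycle_mem_of_isMultiplyPretransitive (G := G)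
    (hsc ▸ hp) (hs ▸ hk)
  have h2 : MulAction.IsMultiplyPretransitive G Ω 2 :=
    isMultiplyPretransitive_of_le (n := s.ncard + 1) (by omega) (by omega)
  exact Perm.alternatingGroup_le_of_isPreprimitive_of_isThreeCycle_mem
    (isPreprimitive_of_is_two_pretransitive h2) hg hgG

/-- **Jordan's Théorème I of [Jor73].** Let `p` be an odd prime and `k > 2`. A permutation
group of degree `n = p + k` which is `(k+1)`-transitive contains the alternating group. -/
theorem jordan_transitivity_bound (Ω : Type*) [Fintype Ω] [DecidableEq Ω]
    (p k : ℕ) (hp : p.Prime) (hodd : Odd p) (hk : 2 < k)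
    (hn : Fintype.card Ω = p + k)
    (G : Subgroup (Equiv.Perm Ω))
    (hG : IsMultiplyPretransitive G Ω (k + 1)) :
    alternatingGroup Ω ≤ G :=
  jordan_transitivity_bound_general Ω p k hp hk hn G hG
end

section
/- Let g be a permutation of a finite set, and suppose g has a cycle of length ℓ in its cycle decomposition such that ℓ is coprime to the length of every other cycle of g. Then some power of g is a cycle of length ℓ. -/
/-!
Write `g = c * h` with `h = g * c⁻¹`, whose cycles are the other cycles of `g`. Then `c` and `h`
commute and `orderOf h` is the lcm of lengths coprime to `ℓ`, so `g ^ orderOf h = c ^ orderOf h`,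
a power of the `ℓ`-cycle `c` with exponent coprime to `ℓ`, hence again an `ℓ`-cycle.
-/

open Equiv Perm

theorem Nat.Coprime.multiset_lcm_right {k : ℕ} {s : Multiset ℕ} (h : ∀ n ∈ s, k.Coprime n) :
    k.Coprime s.lcm :=
  (Nat.coprime_multiset_prod_right_iff.2 h).coprime_dvd_right
    (Multiset.lcm_dvd.2 fun _ hn => Multiset.dvd_prod hn)

theorem Commute.pow_orderOf_mul_inv {G : Type*} [Group G] {g c : G} (h : Commute g c) :
    g ^ orderOf (g * c⁻¹) = c ^ orderOf (g * c⁻¹) := by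
  have hcomm : Commute (g * c⁻¹) c := h.mul_left (Commute.refl c).inv_left
  calc g ^ orderOf (g * c⁻¹) = (g * c⁻¹ * c) ^ orderOf (g * c⁻¹) := by rw [inv_mul_cancel_right]
    _ = (g * c⁻¹) ^ orderOf (g * c⁻¹) * c ^ orderOf (g * c⁻¹) := hcomm.mul_pow _
    _ = c ^ orderOf (g * c⁻¹) := by rw [pow_orderOf_eq_one, one_mul]

namespace Equiv.Perm

variable {α : Type*} [Fintype α] [DecidableEq α]

theorem coprime_orderOf_mul_inv_of_mem_cycleFactorsFinset {g c : Perm α} {k : ℕ}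
    (hc : c ∈ g.cycleFactorsFinset)
    (hk : ∀ c' ∈ g.cycleFactorsFinset, c' ≠ c → k.Coprime c'.support.card) :
    k.Coprime (orderOf (g * c⁻¹)) := by
  rw [← lcm_cycleType]
  refine Nat.Coprime.multiset_lcm_right fun n hn => ?_
  rw [cycleType_def, Multiset.mem_map] at hn
  obtain ⟨c', hc', rfl⟩ := hn
  rw [← Finset.mem_def, cycleFactorsFinset_mul_inv_mem_eq_sdiff hc, Finset.mem_sdiff,
    Finset.mem_singleton] at hc'
  exact hk c' hc'.1 hc'.2

end Equiv.Perm

/-- If a permutation `g` of a finite set has a cycle of length `ℓ` in its cycle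
decomposition whose length is coprime to the length of every other cycle of `g`,
then some power of `g` is a cycle of length `ℓ`. -/
theorem pow_isCycle_of_coprime_cycle (Ω : Type*) [Fintype Ω] [DecidableEq Ω]
    (g : Equiv.Perm Ω) (c : Equiv.Perm Ω) (ℓ : ℕ)
    (hc : c ∈ g.cycleFactorsFinset) (hlen : c.support.card = ℓ)
    (hcop : ∀ c' ∈ g.cycleFactorsFinset, c' ≠ c → Nat.Coprime ℓ c'.support.card) :
    ∃ m : ℕ, (g ^ m).IsCycle ∧ (g ^ m).support.card = ℓ := by
  have hcyc : c.IsCycle := (mem_cycleFactorsFinset_iff.mp hc).1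
  have hm : (orderOf (g * c⁻¹)).Coprime (orderOf c) := by
    rw [hcyc.orderOf, hlen]
    exact (coprime_orderOf_mul_inv_of_mem_cycleFactorsFinset hc hcop).symm
  refine ⟨orderOf (g * c⁻¹), ?_⟩
  rw [(self_mem_cycle_factors_commute hc).symm.pow_orderOf_mul_inv, support_pow_coprime hm, hlen]
  exact ⟨hcyc.pow_iff.mpr hm, rfl⟩
end

section
/- Let F be a finite field with q = p^e elements, p prime, and let f be a positive integer dividing e with f < e. Then for every nonzero a in F, the permutation g of Fˣ given by g(t) = a · t^(p^f) does not have order q − 1; equivalently, g is not a cycle of length q − 1 on Fˣ. -/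
lemma geom_nat_aux (x m : ℕ) (hx : 1 ≤ x) :
    (x - 1) * ∑ i ∈ Finset.range m, x ^ i = x ^ m - 1 := by
  induction m with
  | zero => simp
  | succ m ih =>
    rw [Finset.sum_range_succ, Nat.mul_add, ih, pow_succ]
    have h1 : 1 ≤ x ^ m := Nat.one_le_pow _ _ hx
    have h2 : (x - 1) * x ^ m = x ^ m * x - x ^ m := by
      rw [Nat.sub_mul, one_mul, Nat.mul_comm]
    have h3 : x ^ m ≤ x ^ m * x := Nat.le_mul_of_pos_right _ hx
    omega

lemma sum_gt_aux (x m : ℕ) (hx : 2 ≤ x) (hm : 2 ≤ m) :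
    m < ∑ i ∈ Finset.range m, x ^ i := by
  induction m with
  | zero => omega
  | succ m ih =>
    rcases Nat.lt_or_ge m 2 with h | h
    · interval_cases m
      · omega
      · rw [Finset.sum_range_succ, Finset.sum_range_one, pow_zero, pow_one]; omega
    · have := ih h
      have h2 : 2 ≤ x ^ m := by
        calc 2 ≤ x := hx
        _ = x ^ 1 := (pow_one x).symm
        _ ≤ x ^ m := Nat.pow_le_pow_right (by omega) (by omega)
      rw [Finset.sum_range_succ]; omega

/-- Let `F` be a finite field with `q = p^e` elements and let `f` be a positive proper
divisor of `e`. For any unit `a`, the permutation `g : t ↦ a * t^(p^f)` of `Fˣ` does not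
have order `q - 1`; equivalently, it is not a cycle of length `q - 1` on `Fˣ`. -/
theorem semilinear_not_full_cycle (F : Type*) [Field F] [Fintype F] [DecidableEq F] (p e : ℕ) (hp : p.Prime)
    (hcard : Fintype.card F = p ^ e) (f : ℕ) (hf : 0 < f) (hfe : f ∣ e) (hflt : f < e)
    (a : Fˣ) (σ : Equiv.Perm Fˣ) (hσ : ∀ t : Fˣ, σ t = a * t ^ (p ^ f)) :
    orderOf σ ≠ p ^ e - 1 ∧ ¬ (σ.IsCycle ∧ σ.support.card = p ^ e - 1) := by
  obtain ⟨m, hm⟩ := hfe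
  have hp1 : 1 < p := hp.one_lt
  have hx2 : 2 ≤ p ^ f := by
    calc 2 ≤ p := hp1
    _ = p ^ 1 := (pow_one p).symm
    _ ≤ p ^ f := Nat.pow_le_pow_right (by omega) hf
  have hm2 : 2 ≤ m := by
    by_contra h
    push_neg at h
    interval_cases m <;> omega
  -- cardinality of units
  have hcardU : Fintype.card Fˣ = p ^ e - 1 := by
    rw [Fintype.card_units, hcard]
  have hunit_pow : ∀ t : Fˣ, t ^ (p ^ e - 1) = 1 := by
    intro t
    rw [← hcardU]
    exact pow_card_eq_one
  have hpe1 : 1 ≤ p ^ e := Nat.one_le_pow _ _ (by omega)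
  have ht_pe : ∀ t : Fˣ, t ^ (p ^ e) = t := by
    intro t
    have : t ^ (p ^ e) = t ^ (p ^ e - 1) * t := by
      rw [← pow_succ]
      congr 1
      omega
    rw [this, hunit_pow, one_mul]
  -- iterate formula
  have key : ∀ k : ℕ, ∀ t : Fˣ,
      (σ ^ k) t = a ^ (∑ i ∈ Finset.range k, (p ^ f) ^ i) * t ^ ((p ^ f) ^ k) := by
    intro k
    induction k with
    | zero => intro t; simp
    | succ k ih =>
      intro t
      have hexp : (t ^ (p ^ f)) ^ ((p ^ f) ^ k) = t ^ ((p ^ f) ^ (k + 1)) := by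
        rw [← pow_mul, ← pow_succ']
      rw [pow_succ, Equiv.Perm.mul_apply, hσ, ih, mul_pow, hexp,
        Finset.sum_range_succ, pow_add a, mul_assoc]
  set S : ℕ := ∑ i ∈ Finset.range m, (p ^ f) ^ i with hS
  have hσm : ∀ t : Fˣ, (σ ^ m) t = a ^ S * t := by
    intro t
    rw [key m t, ← pow_mul, ← hm, ht_pe]
  have hσmn : ∀ n : ℕ, ∀ t : Fˣ, ((σ ^ m) ^ n) t = (a ^ S) ^ n * t := by
    intro n
    induction n with
    | zero => intro t; simp
    | succ n ih =>
      intro t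
      rw [pow_succ', Equiv.Perm.mul_apply, hσm, ih, pow_succ,
        ← mul_assoc, mul_comm (a ^ S) ((a ^ S) ^ n)]
  have hSmul : (p ^ f - 1) * S = p ^ e - 1 := by
    rw [hS, geom_nat_aux _ _ (by omega), ← pow_mul, ← hm]
  have hc1 : (a ^ S) ^ (p ^ f - 1) = 1 := by
    rw [← pow_mul, mul_comm, ← Nat.mul_comm S (p ^ f - 1)]
    rw [Nat.mul_comm S (p ^ f - 1), hSmul]
    exact hunit_pow a
  have hσpow : σ ^ (m * (p ^ f - 1)) = 1 := by
    ext t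
    rw [pow_mul]
    simp only [Equiv.Perm.coe_one, id_eq]
    rw [hσmn, hc1, one_mul]
  have hdvd : orderOf σ ∣ m * (p ^ f - 1) := orderOf_dvd_of_pow_eq_one hσpow
  have hpos : 0 < m * (p ^ f - 1) := by
    apply Nat.mul_pos <;> omega
  have hle : orderOf σ ≤ m * (p ^ f - 1) := Nat.le_of_dvd hpos hdvd
  have hlt : m * (p ^ f - 1) < p ^ e - 1 := by
    rw [← hSmul]
    have hSgt : m < S := sum_gt_aux _ _ hx2 hm2
    calc m * (p ^ f - 1) < S * (p ^ f - 1) :=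
          Nat.mul_lt_mul_of_lt_of_le hSgt (le_refl _) (by omega)
    _ = (p ^ f - 1) * S := Nat.mul_comm _ _
  have hne : orderOf σ ≠ p ^ e - 1 := by omega
  refine ⟨hne, ?_⟩
  rintro ⟨hc, hsc⟩
  exact hne (hc.orderOf.trans hsc)
end
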